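/- arXiv:1708.08102 — 3 statements merged into one kernel-verified Lean document; each statement's English description precedes it below -/
import Mathlib

section
/- Let p ≤ n be positive integers, let 2 ≤ α < 4 and c₀ > 0, and let w be a real random variable with E[w] = 0, E[w²] = 1, satisfying P(|w| ≥ t) ≥ c₀/t^α for all t ≥ 1. Let W = (w_{ij}) be a p × n random matrix whose entries are i.i.d. copies of w, and let Γ = (1/n) W Wᵀ. If K ≥ 1 and p ≥ (2/c₀) K^{α/2} n^{α/2 − 1}, then P( λ_max(Γ) ≥ K ) ≥ 1/2. -/
open MeasureTheory ProbabilityTheory Matrix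

/-- The largest eigenvalue of a real (symmetric) matrix, defined as the supremum of its
spectrum.  For a real symmetric matrix the spectrum is exactly the (nonempty, finite) set of
its eigenvalues, so this is the largest eigenvalue. -/
noncomputable def lambdaMax {p : ℕ} (A : Matrix (Fin p) (Fin p) ℝ) : ℝ :=
  sSup (spectrum ℝ A)

/-! If a single entry satisfies `|w_{ij}| ≥ √(K n)`, the `i`-th diagonal entry of `Γ` is
already at least `K`, and a diagonal entry of a symmetric matrix never exceeds its largest
eigenvalue. By the tail bound each of the `p n` independent entries is that large with
probability at least `q = c₀ / (K n)^{α/2}`, so none is with probability at most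
`(1 - q)^{p n} ≤ exp(-p n q)`, and the hypothesis on `p` says exactly that `p n q ≥ 2`, making
this at most `e^{-2} < 1/2`. -/

open Real

theorem Matrix.IsHermitian.diag_le_lambdaMax {p : ℕ} {A : Matrix (Fin p) (Fin p) ℝ}
    (hA : A.IsHermitian) (i : Fin p) : A i i ≤ lambdaMax A := by
  have hpsd : (algebraMap ℝ _ (lambdaMax A) - A).PosSemidef := by
    refine posSemidef_iff_isHermitian_and_spectrum_nonneg.mpr ⟨?_, ?_⟩
    · rw [algebraMap_eq_diagonal]
      exact (isHermitian_diagonal _).sub hA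
    · rw [← spectrum.singleton_sub_eq]
      rintro _ ⟨_, rfl, μ, hμ, rfl⟩
      exact sub_nonneg.mpr (le_csSup A.finite_spectrum.bddAbove hμ)
  simpa [algebraMap_matrix_apply] using hpsd.diag_nonneg (i := i)

theorem Matrix.mul_sq_le_lambdaMax_smul_mul_transpose {p n : ℕ} (M : Matrix (Fin p) (Fin n) ℝ)
    {c : ℝ} (hc : 0 ≤ c) (i : Fin p) (j : Fin n) :
    c * M i j ^ 2 ≤ lambdaMax (c • (M * Mᵀ)) := by
  have hherm : (c • (M * Mᵀ)).IsHermitian := by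
    simpa using (isHermitian_mul_conjTranspose_self M).smul (IsSelfAdjoint.all c)
  refine le_trans ?_ (hherm.diag_le_lambdaMax i)
  simp only [smul_apply, mul_apply, transpose_apply, smul_eq_mul, ← sq]
  exact mul_le_mul_of_nonneg_left
    (Finset.single_le_sum (fun k _ => sq_nonneg (M i k)) (Finset.mem_univ j)) hc

theorem Matrix.le_lambdaMax_gram_of_sqrt_le_abs {p n : ℕ} (hn : 0 < n)
    (M : Matrix (Fin p) (Fin n) ℝ) {K : ℝ} (hK : 0 ≤ K) {i : Fin p} {j : Fin n}
    (hij : √(K * n) ≤ |M i j|) : K ≤ lambdaMax ((1 / (n : ℝ)) • (M * Mᵀ)) :=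
  calc K = 1 / n * √(K * n) ^ 2 := by rw [sq_sqrt (by positivity)]; field_simp
    _ ≤ 1 / n * M i j ^ 2 := by rw [← sq_abs (M i j)]; gcongr
    _ ≤ _ := M.mul_sq_le_lambdaMax_smul_mul_transpose (by positivity) i j

theorem prob_compl_le_exp_neg {Ω : Type*} [MeasurableSpace Ω] {μ : Measure Ω}
    [IsProbabilityMeasure μ] {s : Set Ω} (hs : NullMeasurableSet s μ) {q : ℝ} (hq : 0 ≤ q)
    (hqs : ENNReal.ofReal q ≤ μ s) : μ sᶜ ≤ ENNReal.ofReal (exp (-q)) :=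
  calc μ sᶜ = 1 - μ s := prob_compl_eq_one_sub₀ hs
    _ ≤ 1 - ENNReal.ofReal q := tsub_le_tsub_left hqs 1
    _ = ENNReal.ofReal (1 - q) := by rw [ENNReal.ofReal_sub 1 hq, ENNReal.ofReal_one]
    _ ≤ ENNReal.ofReal (exp (-q)) :=
      ENNReal.ofReal_le_ofReal (by linarith [add_one_le_exp (-q)])

theorem ProbabilityTheory.iIndepFun.measure_iInter_preimage_le_exp {Ω ι β : Type*}
    [MeasurableSpace Ω] {μ : Measure Ω} [Fintype ι] [MeasurableSpace β] {X : ι → Ω → β}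
    (hX : iIndepFun X μ) {S : Set β} (hS : MeasurableSet S) {q : ℝ}
    (h : ∀ i, μ (X i ⁻¹' S) ≤ ENNReal.ofReal (exp (-q))) :
    μ (⋂ i, X i ⁻¹' S) ≤ ENNReal.ofReal (exp (-(Fintype.card ι * q))) :=
  calc μ (⋂ i, X i ⁻¹' S) = ∏ i, μ (X i ⁻¹' S) := by
        simpa using hX.measure_inter_preimage_eq_mul Finset.univ (fun _ _ => hS)
    _ ≤ ∏ _i : ι, ENNReal.ofReal (exp (-q)) := Finset.prod_le_prod' fun i _ => h i
    _ = ENNReal.ofReal (exp (-(Fintype.card ι * q))) := by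
        rw [Finset.prod_const, Finset.card_univ, ← ENNReal.ofReal_pow (exp_pos _).le,
          ← exp_nat_mul, mul_neg]

theorem one_half_le_prob_compl {Ω : Type*} [MeasurableSpace Ω] {μ : Measure Ω}
    [IsProbabilityMeasure μ] {s : Set Ω} (hs : μ s ≤ 1 / 2) : 1 / 2 ≤ μ sᶜ :=
  calc (1 : ENNReal) / 2 = 1 - 1 / 2 := by rw [one_div, ENNReal.one_sub_inv_two]
    _ ≤ 1 - μ s := tsub_le_tsub_left hs 1
    _ ≤ μ sᶜ := tsub_le_iff_left.mpr (measure_univ.symm.trans_le (measure_univ_le_add_compl _))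

theorem two_le_mul_div_sqrt_rpow {p n : ℕ} (hn : 0 < n) {α c₀ K : ℝ} (hc₀ : 0 < c₀)
    (hK : 0 < K)
    (hpbig : (2 / c₀) * K ^ (α / 2) * (n : ℝ) ^ (α / 2 - 1) ≤ (p : ℝ)) :
    2 ≤ (p * n : ℝ) * (c₀ / √(K * n) ^ α) := by
  have hn' : (0 : ℝ) < n := by exact_mod_cast hn
  have hpow : √(K * n) ^ α = K ^ (α / 2) * (n : ℝ) ^ (α / 2 - 1) * n := by
    rw [sqrt_eq_rpow, ← rpow_mul (by positivity), mul_rpow hK.le hn'.le, mul_assoc,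
      ← rpow_add_one hn'.ne']
    ring_nf
  rw [hpow, mul_div_assoc', le_div_iff₀ (by positivity)]
  calc 2 * (K ^ (α / 2) * (n : ℝ) ^ (α / 2 - 1) * n)
      = c₀ * ((2 / c₀) * K ^ (α / 2) * (n : ℝ) ^ (α / 2 - 1)) * n := by field_simp
    _ ≤ c₀ * p * n := by gcongr
    _ = p * n * c₀ := by ring

theorem stmt_2_general {Ω : Type*} [MeasureSpace Ω] [IsProbabilityMeasure (ℙ : Measure Ω)]
    (p n : ℕ) (hp : 0 < p) (hpn : p ≤ n)
    (α c₀ : ℝ) (hc₀ : 0 < c₀)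
    (w : Ω → ℝ)
    (htail : ∀ t : ℝ, 1 ≤ t → ENNReal.ofReal (c₀ / t ^ α) ≤ ℙ {ω | t ≤ |w ω|})
    (W : Fin p → Fin n → Ω → ℝ)
    (hindep : iIndepFun (fun ij : Fin p × Fin n => W ij.1 ij.2) ℙ)
    (hident : ∀ i j, IdentDistrib (W i j) w ℙ ℙ)
    (K : ℝ) (hK : 1 ≤ K)
    (hpbig : (2 / c₀) * K ^ (α / 2) * (n : ℝ) ^ (α / 2 - 1) ≤ (p : ℝ)) :
    (1 : ENNReal) / 2
      ≤ ℙ {ω | K ≤ lambdaMax ((1 / (n : ℝ)) •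
            (Matrix.of (fun i j => W i j ω) * (Matrix.of (fun i j => W i j ω))ᵀ))} := by
  have hn : 0 < n := hp.trans_le hpn
  set t := √(K * n)
  have ht : 1 ≤ t :=
    one_le_sqrt.mpr (one_le_mul_of_one_le_of_one_le hK (by exact_mod_cast hn))
  set q := c₀ / t ^ α
  have hq : 2 ≤ (p * n : ℝ) * q := two_le_mul_div_sqrt_rpow hn hc₀ (by linarith) hpbig
  set S := {x : ℝ | t ≤ |x|}
  have hS : MeasurableSet S := measurableSet_le measurable_const measurable_abs
  have hsmall :
      ∀ ij : Fin p × Fin n, ℙ (W ij.1 ij.2 ⁻¹' Sᶜ) ≤ ENNReal.ofReal (exp (-q)) :=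
    fun ⟨i, j⟩ => prob_compl_le_exp_neg ((hident i j).aemeasurable_fst.nullMeasurable hS)
      (by positivity) (by rw [(hident i j).measure_mem_eq hS]; exact htail t ht)
  set N := ⋂ ij : Fin p × Fin n, W ij.1 ij.2 ⁻¹' Sᶜ
  have hN : ℙ N ≤ 1 / 2 := by
    refine (hindep.measure_iInter_preimage_le_exp hS.compl hsmall).trans ?_
    have hexp : exp (-(Fintype.card (Fin p × Fin n) * q)) ≤ 1 / 2 := by
      refine le_trans (exp_le_exp.mpr ?_) exp_neg_one_lt_half.le
      simp only [Fintype.card_prod, Fintype.card_fin, Nat.cast_mul]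
      linarith
    simpa using ENNReal.ofReal_le_ofReal hexp
  refine (one_half_le_prob_compl hN).trans (measure_mono ?_)
  simp only [N, Set.compl_iInter, Set.preimage_compl, compl_compl, Set.subset_def,
    Set.mem_iUnion]
  rintro ω ⟨⟨i, j⟩, hij⟩
  exact (Matrix.of fun i j => W i j ω).le_lambdaMax_gram_of_sqrt_le_abs hn (by linarith) hij

/-- Let `p ≤ n` be positive integers, `2 ≤ α < 4`, `c₀ > 0`, and let `w` be a real random
variable with `E[w] = 0`, `E[w²] = 1`, satisfying `P(|w| ≥ t) ≥ c₀ / t^α` for all `t ≥ 1`.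
Let `W = (w_{ij})` be a `p × n` random matrix with i.i.d. entries distributed as `w`, and let
`Γ = (1/n) W Wᵀ`.  If `K ≥ 1` and `p ≥ (2/c₀) K^(α/2) n^(α/2 − 1)`, then
`P(λ_max(Γ) ≥ K) ≥ 1/2`. -/
theorem stmt_2 {Ω : Type*} [MeasureSpace Ω] [IsProbabilityMeasure (ℙ : Measure Ω)]
    (p n : ℕ) (hp : 0 < p) (hpn : p ≤ n)
    (α c₀ : ℝ) (hα : 2 ≤ α) (hα4 : α < 4) (hc₀ : 0 < c₀)
    (w : Ω → ℝ) (hmean : ∫ ω, w ω = 0) (hvar : ∫ ω, (w ω) ^ 2 = 1)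
    (htail : ∀ t : ℝ, 1 ≤ t → ENNReal.ofReal (c₀ / t ^ α) ≤ ℙ {ω | t ≤ |w ω|})
    (W : Fin p → Fin n → Ω → ℝ)
    (hindep : iIndepFun (fun ij : Fin p × Fin n => W ij.1 ij.2) ℙ)
    (hident : ∀ i j, IdentDistrib (W i j) w ℙ ℙ)
    (K : ℝ) (hK : 1 ≤ K)
    (hpbig : (2 / c₀) * K ^ (α / 2) * (n : ℝ) ^ (α / 2 - 1) ≤ (p : ℝ)) :
    (1 : ENNReal) / 2
      ≤ ℙ {ω | K ≤ lambdaMax ((1 / (n : ℝ)) •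
            (Matrix.of (fun i j => W i j ω) * (Matrix.of (fun i j => W i j ω))ᵀ))} :=
  stmt_2_general p n hp hpn α c₀ hc₀ w htail W hindep hident K hK hpbig
end

section
/- Let p ≤ n be positive integers, let α ≥ 2 and c₀ > 0, and let w be a real random variable with E[w] = 0, E[w²] = 1, satisfying P(|w| ≥ t) ≥ c₀/t^α for all t ≥ 1. Let W = (w_{ij}) be a p × n random matrix whose entries are i.i.d. copies of w, and let X_i ∈ ℝⁿ denote the i-th row of W. If K ≥ 1 and (n/2) P(w² ≥ Kn) ≤ 1/p, then P( max_{1 ≤ i ≤ p} |X_i| ≥ √(Kn) ) ≥ c₀ p / (4 n^{α/2 − 1} K^{α/2}). -/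
/-!
A row has norm at least `|w_{ij}|` for each of its entries, so the event contains the event that
some entry satisfies `|w_{ij}| ≥ t := √(Kn)`. Each entry does so with probability at least
`q := c₀ / t^α`, hence by independence that event has probability at least `1 - (1 - q)^{pn}`.
The smallness hypothesis gives `pnq ≤ 2`, so `1 - (1 - q)^{pn} ≥ pnq / (1 + pnq) ≥ pnq / 4`, and
`pnq / 4 = c₀ p / (4 n^{α/2-1} K^{α/2})`.
-/

open MeasureTheory ProbabilityTheory
open scoped ENNReal

theorem div_one_add_mul_le_one_sub_one_sub_pow (N : ℕ) {x : ℝ} (hx₀ : 0 ≤ x) (hx₁ : x ≤ 1) :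
    N * x / (1 + N * x) ≤ 1 - (1 - x) ^ N := by
  have hprod : (1 + N * x) * (1 - x) ^ N ≤ 1 :=
    calc (1 + N * x) * (1 - x) ^ N ≤ (1 + x) ^ N * (1 - x) ^ N := by
          gcongr ?_ * _
          exact one_add_mul_le_pow (by linarith) N
      _ = (1 - x ^ 2) ^ N := by rw [← mul_pow]; ring
      _ ≤ 1 := pow_le_one₀ (by nlinarith) (by nlinarith)
  rw [div_le_iff₀ (by positivity)]
  nlinarith

theorem ENNReal.ofReal_mul_div_four_le_one_sub_one_sub_pow (N : ℕ) {x : ℝ} (hx₀ : 0 ≤ x)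
    (hx₁ : x ≤ 1) (hNx : N * x ≤ 2) :
    ENNReal.ofReal (N * x / 4) ≤ 1 - (1 - ENNReal.ofReal x) ^ N := by
  rw [← ENNReal.ofReal_one, ← ENNReal.ofReal_sub _ hx₀, ← ENNReal.ofReal_pow (by linarith),
    ← ENNReal.ofReal_sub _ (pow_nonneg (by linarith) _)]
  refine ENNReal.ofReal_le_ofReal (le_trans ?_ (div_one_add_mul_le_one_sub_one_sub_pow N hx₀ hx₁))
  gcongr
  linarith

theorem ProbabilityTheory.iIndepFun.one_sub_one_sub_pow_le_measure_iUnion_preimage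
    {Ω ι β : Type*} [MeasurableSpace Ω] [MeasurableSpace β] [Fintype ι] {μ : Measure Ω}
    [IsProbabilityMeasure μ] {X : ι → Ω → β} (hX : iIndepFun X μ)
    (hXm : ∀ i, AEMeasurable (X i) μ) {S : Set β} (hS : MeasurableSet S) {q : ℝ≥0∞}
    (hq : ∀ i, q ≤ μ (X i ⁻¹' S)) :
    1 - (1 - q) ^ Fintype.card ι ≤ μ (⋃ i, X i ⁻¹' S) := by
  have hmiss : μ (⋂ i, X i ⁻¹' Sᶜ) ≤ (1 - q) ^ Fintype.card ι :=
    calc μ (⋂ i, X i ⁻¹' Sᶜ) = ∏ i, μ (X i ⁻¹' Sᶜ) := by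
          simpa using hX.measure_inter_preimage_eq_mul Finset.univ (fun _ _ => hS.compl)
      _ = ∏ i, (1 - μ (X i ⁻¹' S)) := by
          simp_rw [Set.preimage_compl]
          exact Finset.prod_congr rfl fun i _ => prob_compl_eq_one_sub₀ ((hXm i).nullMeasurable hS)
      _ ≤ ∏ _i : ι, (1 - q) := Finset.prod_le_prod' fun i _ => tsub_le_tsub_left (hq i) 1
      _ = (1 - q) ^ Fintype.card ι := by simp
  calc 1 - (1 - q) ^ Fintype.card ι ≤ 1 - μ (⋂ i, X i ⁻¹' Sᶜ) := tsub_le_tsub_left hmiss 1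
    _ ≤ μ (⋃ i, X i ⁻¹' S) := by
      rw [tsub_le_iff_right, ← measure_univ (μ := μ)]
      simpa only [Set.preimage_compl, ← Set.compl_iUnion] using measure_univ_le_add_compl _

theorem abs_le_iSup_sqrt_sum_sq {ι κ : Type*} [Finite ι] [Fintype κ] (f : ι → κ → ℝ) (i : ι)
    (j : κ) : |f i j| ≤ ⨆ i, √(∑ j, f i j ^ 2) :=
  (Real.abs_le_sqrt (Finset.single_le_sum (fun j _ => sq_nonneg (f i j)) (Finset.mem_univ j))).trans
    (le_ciSup (f := fun i => √(∑ j, f i j ^ 2)) (Set.finite_range _).bddAbove i)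

theorem Real.sqrt_mul_rpow {x y : ℝ} (hx : 0 ≤ x) (hy : 0 < y) (α : ℝ) :
    √(x * y) ^ α = x ^ (α / 2) * y ^ (α / 2 - 1) * y := by
  rw [Real.sqrt_eq_rpow, ← Real.rpow_mul (by positivity), Real.mul_rpow hx hy.le, mul_assoc,
    ← Real.rpow_add_one hy.ne', sub_add_cancel]
  ring_nf

theorem stmt_6_general {Ω : Type*} [MeasureSpace Ω] [IsProbabilityMeasure (ℙ : Measure Ω)]
    (p n : ℕ) (hp : 0 < p) (hpn : p ≤ n)
    (α c₀ : ℝ) (hc₀ : 0 < c₀)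
    (w : Ω → ℝ)
    (htail : ∀ t : ℝ, 1 ≤ t → ENNReal.ofReal (c₀ / t ^ α) ≤ ℙ {ω | t ≤ |w ω|})
    (W : Fin p → Fin n → Ω → ℝ)
    (hindep : iIndepFun (fun ij : Fin p × Fin n => W ij.1 ij.2) ℙ)
    (hident : ∀ i j, IdentDistrib (W i j) w ℙ ℙ)
    (K : ℝ) (hK : 1 ≤ K)
    (hsmall : (n : ℝ) / 2 * (ℙ {ω | K * (n : ℝ) ≤ (w ω) ^ 2}).toReal ≤ 1 / (p : ℝ)) :
    ENNReal.ofReal (c₀ * p / (4 * (n : ℝ) ^ (α / 2 - 1) * K ^ (α / 2)))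
      ≤ ℙ {ω | Real.sqrt (K * n) ≤ ⨆ i, Real.sqrt (∑ j, (W i j ω) ^ 2)} := by
  have hn : (1 : ℝ) ≤ n := by exact_mod_cast hp.trans_le hpn
  set t := √(K * n)
  have ht : 1 ≤ t := Real.one_le_sqrt.mpr (one_le_mul_of_one_le_of_one_le hK hn)
  set q := c₀ / t ^ α with hq_def
  have hq : ENNReal.ofReal q ≤ ℙ {ω | t ≤ |w ω|} := htail t ht
  have hq₀ : 0 ≤ q := by positivity
  have hq₁ : q ≤ 1 := ENNReal.ofReal_le_one.mp (hq.trans prob_le_one)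
  have hpnq : (p * n : ℕ) * q ≤ 2 := by
    have hevent : {ω | K * n ≤ w ω ^ 2} = {ω | t ≤ |w ω|} := by
      ext ω
      simp only [Set.mem_ofPred_eq, t, ← Real.sqrt_sq_eq_abs, Real.sqrt_le_sqrt_iff (sq_nonneg _)]
    rw [hevent] at hsmall
    have hqr := (ENNReal.ofReal_le_iff_le_toReal (measure_ne_top _ _)).mp hq
    rw [le_div_iff₀ (by positivity)] at hsmall
    push_cast
    nlinarith [mul_le_mul_of_nonneg_left hqr (by positivity : (0 : ℝ) ≤ p * n)]
  have hS : MeasurableSet {x : ℝ | t ≤ |x|} := measurableSet_le measurable_const measurable_abs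
  have hexists := hindep.one_sub_one_sub_pow_le_measure_iUnion_preimage
    (fun ij => (hident ij.1 ij.2).aemeasurable_fst) hS (q := ENNReal.ofReal q)
    (fun ij => (hident ij.1 ij.2).measure_mem_eq hS ▸ hq)
  calc ENNReal.ofReal (c₀ * p / (4 * (n : ℝ) ^ (α / 2 - 1) * K ^ (α / 2)))
      = ENNReal.ofReal ((p * n : ℕ) * q / 4) := by
        rw [hq_def, Real.sqrt_mul_rpow (by linarith) (by linarith) α]
        push_cast
        field_simp
    _ ≤ 1 - (1 - ENNReal.ofReal q) ^ (p * n) :=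
        ENNReal.ofReal_mul_div_four_le_one_sub_one_sub_pow _ hq₀ hq₁ hpnq
    _ ≤ ℙ (⋃ ij : Fin p × Fin n, W ij.1 ij.2 ⁻¹' {x | t ≤ |x|}) := by simpa using hexists
    _ ≤ _ := measure_mono <| Set.iUnion_subset fun ij ω hω =>
        le_trans hω (abs_le_iSup_sqrt_sum_sq (fun i j => W i j ω) ij.1 ij.2)

/-- Let `p ≤ n` be positive integers, `α ≥ 2`, `c₀ > 0`, and let `w` be a real random variable
with `E[w] = 0`, `E[w²] = 1`, satisfying `P(|w| ≥ t) ≥ c₀ / t^α` for all `t ≥ 1`.  Let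
`W = (w_{ij})` be a `p × n` random matrix with i.i.d. entries distributed as `w`, and let `Xᵢ`
be the `i`-th row of `W`.  If `K ≥ 1` and `(n/2) P(w² ≥ Kn) ≤ 1/p`, then
`P(max_i |Xᵢ| ≥ √(Kn)) ≥ c₀ p / (4 n^(α/2 − 1) K^(α/2))`. -/
theorem stmt_6 {Ω : Type*} [MeasureSpace Ω] [IsProbabilityMeasure (ℙ : Measure Ω)]
    (p n : ℕ) (hp : 0 < p) (hpn : p ≤ n)
    (α c₀ : ℝ) (hα : 2 ≤ α) (hc₀ : 0 < c₀)
    (w : Ω → ℝ) (hmean : ∫ ω, w ω = 0) (hvar : ∫ ω, (w ω) ^ 2 = 1)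
    (htail : ∀ t : ℝ, 1 ≤ t → ENNReal.ofReal (c₀ / t ^ α) ≤ ℙ {ω | t ≤ |w ω|})
    (W : Fin p → Fin n → Ω → ℝ)
    (hindep : iIndepFun (fun ij : Fin p × Fin n => W ij.1 ij.2) ℙ)
    (hident : ∀ i j, IdentDistrib (W i j) w ℙ ℙ)
    (K : ℝ) (hK : 1 ≤ K)
    (hsmall : (n : ℝ) / 2 * (ℙ {ω | K * (n : ℝ) ≤ (w ω) ^ 2}).toReal ≤ 1 / (p : ℝ)) :
    ENNReal.ofReal (c₀ * p / (4 * (n : ℝ) ^ (α / 2 - 1) * K ^ (α / 2)))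
      ≤ ℙ {ω | Real.sqrt (K * n) ≤ ⨆ i, Real.sqrt (∑ j, (W i j ω) ^ 2)} :=
  stmt_6_general p n hp hpn α c₀ hc₀ w htail W hindep hident K hK hsmall
end

section
/- Let p ≤ n be positive integers and let w be a real random variable with E[w] = 0 and E[w²] = 1. Let W = (w_{ij}) be a p × n random matrix whose entries are i.i.d. copies of w, and let X_i ∈ ℝⁿ denote the i-th row of W. If K ≥ 1 and (n/2) P(w² ≥ Kn) ≥ 1/p, then P( max_{1 ≤ i ≤ p} |X_i| ≥ √(Kn) ) ≥ 1/2. -/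
/-!
With `s = {x | K n ≤ x²}` and `q = P(w ∈ s)`, the hypothesis says `p n q ≥ 2`. By independence
none of the `p n` entries lands in `s` with probability `(1 - q)^{pn} ≤ e^{-pnq} ≤ e^{-2} < 1/2`,
and a single entry with `w_{ij}² ≥ K n` already forces `|X_i| ≥ √(K n)`.
-/

open MeasureTheory ProbabilityTheory

lemma one_sub_pow_le_half_of_two_le_mul {r : ℝ} (hr : r ≤ 1) {m : ℕ} (hm : 2 ≤ m * r) :
    (1 - r) ^ m ≤ 1 / 2 :=
  calc (1 - r) ^ m ≤ Real.exp (-r) ^ m :=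
        pow_le_pow_left₀ (by linarith) (Real.one_sub_le_exp_neg r) m
    _ = Real.exp (-(m * r)) := by rw [← Real.exp_nat_mul]; ring_nf
    _ ≤ Real.exp (-2) := Real.exp_le_exp.mpr (by linarith)
    _ ≤ 1 / 2 := by
        rw [Real.exp_neg, one_div]
        gcongr
        linarith [Real.add_one_le_exp 2]

lemma Real.sqrt_le_iSup_sqrt_sum_sq {ι κ : Type*} [Finite ι] [Fintype κ] (f : ι → κ → ℝ)
    {a : ℝ} {i : ι} {j : κ} (h : a ≤ f i j ^ 2) :
    √a ≤ ⨆ i, √(∑ j, f i j ^ 2) :=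
  calc √a ≤ √(∑ j, f i j ^ 2) :=
        Real.sqrt_le_sqrt <| h.trans <|
          Finset.single_le_sum (fun j _ ↦ sq_nonneg (f i j)) (Finset.mem_univ j)
    _ ≤ ⨆ i, √(∑ j, f i j ^ 2) :=
        le_ciSup (f := fun i ↦ √(∑ j, f i j ^ 2)) (Set.finite_range _).bddAbove i

section IdentDistribIndep

variable {Ω Ω' ι β : Type*} [MeasurableSpace Ω] [MeasurableSpace Ω'] [MeasurableSpace β]
  {μ : Measure Ω} {ν : Measure Ω'} [IsProbabilityMeasure μ] [Fintype ι]
  {X : ι → Ω → β} {Y : Ω' → β} {s : Set β}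

lemma measureReal_iInter_preimage_compl_eq_pow (hindep : iIndepFun X μ)
    (hident : ∀ i, IdentDistrib (X i) Y μ ν) (hs : MeasurableSet s) :
    μ.real (⋂ i, X i ⁻¹' sᶜ) = (1 - ν.real (Y ⁻¹' s)) ^ Fintype.card ι := by
  have hcompl (i : ι) : μ.real (X i ⁻¹' sᶜ) = 1 - ν.real (Y ⁻¹' s) := by
    rw [Set.preimage_compl,
      probReal_compl_eq_one_sub₀ ((hident i).aemeasurable_fst.nullMeasurableSet_preimage hs),
      measureReal_def, measureReal_def, (hident i).measure_mem_eq hs]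
  have hinter := hindep.measure_inter_preimage_eq_mul Finset.univ (sets := fun _ ↦ sᶜ)
    (fun _ _ ↦ hs.compl)
  simp only [Finset.mem_univ, Set.iInter_true] at hinter
  rw [measureReal_def, hinter, ENNReal.toReal_prod]
  simp only [← measureReal_def, hcompl, Finset.prod_const, Finset.card_univ]

lemma half_le_measureReal_iUnion_preimage [IsProbabilityMeasure ν] (hindep : iIndepFun X μ)
    (hident : ∀ i, IdentDistrib (X i) Y μ ν) (hs : MeasurableSet s)
    (hq : 2 ≤ Fintype.card ι * ν.real (Y ⁻¹' s)) :
    1 / 2 ≤ μ.real (⋃ i, X i ⁻¹' s) := by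
  have hcompl : (⋃ i, X i ⁻¹' s)ᶜ = ⋂ i, X i ⁻¹' sᶜ := by
    simp only [Set.compl_iUnion, Set.preimage_compl]
  have hsplit := measureReal_union_le (μ := μ) (⋃ i, X i ⁻¹' s) (⋃ i, X i ⁻¹' s)ᶜ
  rw [Set.union_compl_self, probReal_univ, hcompl,
    measureReal_iInter_preimage_compl_eq_pow hindep hident hs] at hsplit
  linarith [one_sub_pow_le_half_of_two_le_mul measureReal_le_one hq]

end IdentDistribIndep

theorem stmt_7_general {Ω : Type*} [MeasureSpace Ω] [IsProbabilityMeasure (ℙ : Measure Ω)]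
    (p n : ℕ) (hp : 0 < p)
    (w : Ω → ℝ)
    (W : Fin p → Fin n → Ω → ℝ)
    (hindep : iIndepFun (fun ij : Fin p × Fin n => W ij.1 ij.2) ℙ)
    (hident : ∀ i j, IdentDistrib (W i j) w ℙ ℙ)
    (K : ℝ)
    (hbig : 1 / (p : ℝ) ≤ (n : ℝ) / 2 * (ℙ {ω | K * (n : ℝ) ≤ (w ω) ^ 2}).toReal) :
    (1 : ENNReal) / 2 ≤ ℙ {ω | Real.sqrt (K * n) ≤ ⨆ i, Real.sqrt (∑ j, (W i j ω) ^ 2)} := by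
  set s : Set ℝ := {x | K * n ≤ x ^ 2}
  have hs : MeasurableSet s := measurableSet_le measurable_const (measurable_id.pow_const 2)
  have hq : 2 ≤ Fintype.card (Fin p × Fin n) * (ℙ : Measure Ω).real (w ⁻¹' s) := by
    have hp' : (0 : ℝ) < p := Nat.cast_pos.mpr hp
    rw [div_le_iff₀ hp'] at hbig
    rw [Fintype.card_prod, Fintype.card_fin, Fintype.card_fin, Nat.cast_mul]
    change 1 ≤ n / 2 * (ℙ : Measure Ω).real (w ⁻¹' s) * p at hbig
    linarith
  have hunion := half_le_measureReal_iUnion_preimage hindep (fun ij ↦ hident ij.1 ij.2) hs hq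
  calc (1 : ENNReal) / 2 = ENNReal.ofReal (1 / 2) := by
        rw [ENNReal.ofReal_div_of_pos two_pos]; simp
    _ ≤ ℙ (⋃ ij : Fin p × Fin n, W ij.1 ij.2 ⁻¹' s) := by
        rw [← ofReal_measureReal]
        exact ENNReal.ofReal_le_ofReal hunion
    _ ≤ _ := measure_mono fun ω hω ↦ by
        obtain ⟨⟨i, j⟩, hij⟩ := Set.mem_iUnion.mp hω
        exact Real.sqrt_le_iSup_sqrt_sum_sq (fun i j ↦ W i j ω) hij

/-- Let `p ≤ n` be positive integers and `w` a real random variable with `E[w] = 0`,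
`E[w²] = 1`.  Let `W = (w_{ij})` be a `p × n` random matrix with i.i.d. entries distributed
as `w`, and let `Xᵢ` be the `i`-th row of `W`.  If `K ≥ 1` and `(n/2) P(w² ≥ Kn) ≥ 1/p`, then
`P(max_i |Xᵢ| ≥ √(Kn)) ≥ 1/2`. -/
theorem stmt_7 {Ω : Type*} [MeasureSpace Ω] [IsProbabilityMeasure (ℙ : Measure Ω)]
    (p n : ℕ) (hp : 0 < p) (hpn : p ≤ n)
    (w : Ω → ℝ) (hmean : ∫ ω, w ω = 0) (hvar : ∫ ω, (w ω) ^ 2 = 1)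
    (W : Fin p → Fin n → Ω → ℝ)
    (hindep : iIndepFun (fun ij : Fin p × Fin n => W ij.1 ij.2) ℙ)
    (hident : ∀ i j, IdentDistrib (W i j) w ℙ ℙ)
    (K : ℝ) (hK : 1 ≤ K)
    (hbig : 1 / (p : ℝ) ≤ (n : ℝ) / 2 * (ℙ {ω | K * (n : ℝ) ≤ (w ω) ^ 2}).toReal) :
    (1 : ENNReal) / 2 ≤ ℙ {ω | Real.sqrt (K * n) ≤ ⨆ i, Real.sqrt (∑ j, (W i j ω) ^ 2)} :=
  stmt_7_general p n hp w W hindep hident K hbig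
end
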